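/- Assume η < 1/(4TL) and that the vectors u_i := ∇f_i(w_i) − (1/T)·Σ_{t=0}^{T−1} ∇f_i(w_{i,t}) satisfy E[⟨u_i, u_j⟩] = 0 for all i ≠ j. Then E[‖(1/N)·Σ_{i=1}^N u_i‖²] ≤ 4Tη²χ²L²/N + (16T²η²L²/N²)·Σ_{i=1}^N E[‖∇f_i(w_i)‖²]. -/

import Mathlib

/-!
Write `ξₜ = gₜ - ∇f(wₜ)` for the gradient noise of one node. Then
`wₜ - w₀ = -η ∑_{s<t} (ξₛ + ∇f(wₛ))`; the `ξₛ` are martingale differences, hence orthogonal in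
`L²`, so the noise contributes at most `t χ²`, while `L`-smoothness bounds `E‖∇f(wₛ)‖²` by
`E‖∇f(w₀)‖²` and the earlier drift `E‖wₛ - w₀‖²`. Since `4ηTL ≤ 1`, the resulting recursive
inequality closes and bounds every drift up to time `T`, and `‖uᵢ‖²` is at most `L²` times the
average drift. Finally, orthogonality of the `uᵢ` gives
`E‖(1/N) ∑ uᵢ‖² = (1/N²) ∑ E‖uᵢ‖²`.
-/

open MeasureTheory Finset
open scoped RealInnerProductSpace NNReal

section Deterministic

variable {E : Type*} [NormedAddCommGroup E]

theorem norm_add_sq_le_two_mul (x y : E) : ‖x + y‖ ^ 2 ≤ 2 * (‖x‖ ^ 2 + ‖y‖ ^ 2) :=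
  (pow_le_pow_left₀ (norm_nonneg _) (norm_add_le x y) 2).trans add_sq_le

theorem norm_sum_sq_le_card_mul {ι : Type*} (s : Finset ι) (v : ι → E) :
    ‖∑ i ∈ s, v i‖ ^ 2 ≤ #s * ∑ i ∈ s, ‖v i‖ ^ 2 :=
  (pow_le_pow_left₀ (norm_nonneg _) (norm_sum_le s v) 2).trans sq_sum_le_card_mul_sum_sq

theorem LipschitzWith.norm_sub_sq_le {F : Type*} [NormedAddCommGroup F] {K : ℝ≥0} {G : E → F}
    (hG : LipschitzWith K G) (x y : E) : ‖G x - G y‖ ^ 2 ≤ K ^ 2 * ‖x - y‖ ^ 2 := by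
  rw [← mul_pow]
  exact pow_le_pow_left₀ (norm_nonneg _) (hG.norm_sub_le x y) 2

theorem norm_sub_average_sq_le [NormedSpace ℝ E] {ι : Type*} {s : Finset ι} (hs : s.Nonempty)
    (x : E) (v : ι → E) :
    ‖x - (#s : ℝ)⁻¹ • ∑ i ∈ s, v i‖ ^ 2 ≤ (#s : ℝ)⁻¹ * ∑ i ∈ s, ‖x - v i‖ ^ 2 := by
  have hcard : (0 : ℝ) < #s := by exact_mod_cast hs.card_pos
  have hx : x - (#s : ℝ)⁻¹ • ∑ i ∈ s, v i = (#s : ℝ)⁻¹ • ∑ i ∈ s, (x - v i) := by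
    rw [sum_sub_distrib, sum_const, smul_sub, ← Nat.cast_smul_eq_nsmul ℝ, smul_smul,
      inv_mul_cancel₀ hcard.ne', one_smul]
  rw [hx, norm_smul, mul_pow, Real.norm_of_nonneg (inv_nonneg.2 hcard.le)]
  calc _ ≤ (#s : ℝ)⁻¹ ^ 2 * (#s * ∑ i ∈ s, ‖x - v i‖ ^ 2) := by
        gcongr; exact norm_sum_sq_le_card_mul s _
    _ = _ := by field_simp

end Deterministic

theorem le_two_mul_of_le_add_mul_sum_range {D : ℕ → ℝ} {B κ : ℝ} {T : ℕ} (hB : 0 ≤ B)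
    (hκ : 0 ≤ κ) (hκT : 2 * κ * T ≤ 1) (hD : ∀ t ≤ T, D t ≤ B + κ * ∑ s ∈ range t, D s) :
    ∀ t ≤ T, D t ≤ 2 * B := by
  intro t
  induction t using Nat.strong_induction_on with
  | _ t ih =>
    intro htT
    have hsum : ∑ s ∈ range t, D s ≤ t * (2 * B) := by
      simpa using sum_le_card_nsmul (range t) D (2 * B) fun s hs =>
        ih s (mem_range.1 hs) (by linarith [mem_range.1 hs])
    have htT' : (t : ℝ) ≤ T := by exact_mod_cast htT
    nlinarith [hD t htT, mul_le_mul_of_nonneg_left hsum hκ,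
      mul_le_mul_of_nonneg_right htT' (mul_nonneg hκ hB)]

section L2

variable {F : Type*} [NormedAddCommGroup F] {Ω : Type*} {mΩ : MeasurableSpace Ω} {μ : Measure Ω}

theorem MeasureTheory.MemLp.integrable_norm_sq {X : Ω → F} (hX : MemLp X 2 μ) :
    Integrable (fun ω => ‖X ω‖ ^ 2) μ :=
  (memLp_two_iff_integrable_sq_norm hX.1).mp hX

theorem LipschitzWith.memLp_comp [IsFiniteMeasure μ] {F' : Type*} [NormedAddCommGroup F']
    {p : ENNReal} {K : ℝ≥0} {G : F → F'}
    (hG : LipschitzWith K G) {v : Ω → F} (hv : MemLp v p μ) : MemLp (fun ω => G (v ω)) p μ := by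
  refine ((hv.norm.const_mul K).add (memLp_const ‖G 0‖)).of_le
    (hG.continuous.comp_aestronglyMeasurable hv.1) (ae_of_all _ fun ω => ?_)
  calc ‖G (v ω)‖ ≤ K * ‖v ω‖ + ‖G 0‖ := by
        have hlip : ‖G (v ω) - G 0‖ ≤ K * ‖v ω‖ := by simpa using hG.norm_sub_le (v ω) 0
        linarith [norm_le_norm_add_norm_sub' (G (v ω)) (G 0)]
    _ ≤ _ := Real.le_norm_self _

theorem integral_norm_add_sq_le {X Y : Ω → F} (hX : MemLp X 2 μ) (hY : MemLp Y 2 μ) :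
    ∫ ω, ‖X ω + Y ω‖ ^ 2 ∂μ ≤ 2 * (∫ ω, ‖X ω‖ ^ 2 ∂μ + ∫ ω, ‖Y ω‖ ^ 2 ∂μ) := by
  rw [← integral_add hX.integrable_norm_sq hY.integrable_norm_sq, ← integral_const_mul]
  exact integral_mono_of_nonneg (ae_of_all _ fun ω => by positivity)
    ((hX.integrable_norm_sq.add hY.integrable_norm_sq).const_mul 2)
    (ae_of_all _ fun ω => norm_add_sq_le_two_mul (X ω) (Y ω))

theorem integral_norm_sum_sq_le_card_mul {ι : Type*} (s : Finset ι) {v : ι → Ω → F}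
    (hv : ∀ i ∈ s, MemLp (v i) 2 μ) :
    ∫ ω, ‖∑ i ∈ s, v i ω‖ ^ 2 ∂μ ≤ #s * ∑ i ∈ s, ∫ ω, ‖v i ω‖ ^ 2 ∂μ := by
  rw [← integral_finsetSum _ fun i hi => (hv i hi).integrable_norm_sq, ← integral_const_mul]
  exact integral_mono_of_nonneg (ae_of_all _ fun ω => by positivity)
    ((integrable_finsetSum _ fun i hi => (hv i hi).integrable_norm_sq).const_mul _)
    (ae_of_all _ fun ω => norm_sum_sq_le_card_mul s _)

theorem LipschitzWith.integral_norm_comp_sq_le [IsFiniteMeasure μ] {F' : Type*}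
    [NormedAddCommGroup F'] {K : ℝ≥0} {G : F → F'} (hG : LipschitzWith K G) {v v₀ : Ω → F}
    (hv : MemLp v 2 μ) (hv₀ : MemLp v₀ 2 μ) :
    ∫ ω, ‖G (v ω)‖ ^ 2 ∂μ ≤ 2 * (∫ ω, ‖G (v₀ ω)‖ ^ 2 ∂μ + K ^ 2 * ∫ ω, ‖v ω - v₀ ω‖ ^ 2 ∂μ) := by
  have hGv₀ := hG.memLp_comp hv₀
  calc ∫ ω, ‖G (v ω)‖ ^ 2 ∂μ = ∫ ω, ‖G (v₀ ω) + (G (v ω) - G (v₀ ω))‖ ^ 2 ∂μ := by simp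
    _ ≤ 2 * (∫ ω, ‖G (v₀ ω)‖ ^ 2 ∂μ + ∫ ω, ‖G (v ω) - G (v₀ ω)‖ ^ 2 ∂μ) :=
      integral_norm_add_sq_le hGv₀ ((hG.memLp_comp hv).sub hGv₀)
    _ ≤ _ := by
      gcongr
      rw [← integral_const_mul]
      exact integral_mono_of_nonneg (ae_of_all _ fun ω => by positivity)
        ((hv.sub hv₀).integrable_norm_sq.const_mul _) (ae_of_all _ fun ω => hG.norm_sub_sq_le _ _)

variable {E : Type*} [NormedAddCommGroup E] [InnerProductSpace ℝ E]

theorem MeasureTheory.MemLp.integrable_inner {X Y : Ω → E} (hX : MemLp X 2 μ)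
    (hY : MemLp Y 2 μ) : Integrable (fun ω => ⟪X ω, Y ω⟫) μ :=
  (L2.integrable_inner (𝕜 := ℝ) (hX.toLp X) (hY.toLp Y)).congr <| by
    filter_upwards [hX.coeFn_toLp, hY.coeFn_toLp] with ω hXω hYω
    rw [hXω, hYω]

theorem integral_norm_sum_sq_of_integral_inner_eq_zero {ι : Type*} (s : Finset ι)
    {v : ι → Ω → E} (hv : ∀ i ∈ s, MemLp (v i) 2 μ)
    (horth : ∀ i ∈ s, ∀ j ∈ s, i ≠ j → ∫ ω, ⟪v i ω, v j ω⟫ ∂μ = 0) :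
    ∫ ω, ‖∑ i ∈ s, v i ω‖ ^ 2 ∂μ = ∑ i ∈ s, ∫ ω, ‖v i ω‖ ^ 2 ∂μ := by
  have hint : ∀ i ∈ s, ∀ j ∈ s, Integrable (fun ω => ⟪v i ω, v j ω⟫) μ :=
    fun i hi j hj => (hv i hi).integrable_inner (hv j hj)
  simp_rw [← real_inner_self_eq_norm_sq, sum_inner, inner_sum]
  rw [integral_finsetSum _ fun i hi => integrable_finsetSum _ (hint i hi)]
  refine sum_congr rfl fun i hi => ?_
  rw [integral_finsetSum _ (hint i hi),
    sum_eq_single_of_mem i hi fun j hj hji => horth i hi j hj hji.symm]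

theorem integral_norm_average_sq_le_of_integral_inner_eq_zero {ι : Type*} [Fintype ι]
    {u : ι → Ω → E} (hu : ∀ i, MemLp (u i) 2 μ)
    (horth : ∀ i j, i ≠ j → ∫ ω, ⟪u i ω, u j ω⟫ ∂μ = 0) {a b : ℝ} {c : ι → ℝ}
    (hbound : ∀ i, ∫ ω, ‖u i ω‖ ^ 2 ∂μ ≤ a + b * c i) :
    ∫ ω, ‖(Fintype.card ι : ℝ)⁻¹ • ∑ i, u i ω‖ ^ 2 ∂μ
      ≤ a / Fintype.card ι + b / Fintype.card ι ^ 2 * ∑ i, c i := by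
  set n : ℝ := (Fintype.card ι : ℝ)
  have hn : n⁻¹ * n * n⁻¹ = n⁻¹ := by simpa using mul_inv_mul_cancel n⁻¹
  calc _ = n⁻¹ ^ 2 * ∫ ω, ‖∑ i, u i ω‖ ^ 2 ∂μ := by
        rw [← integral_const_mul]
        simp_rw [norm_smul, mul_pow, Real.norm_eq_abs, sq_abs]
    _ = n⁻¹ ^ 2 * ∑ i, ∫ ω, ‖u i ω‖ ^ 2 ∂μ := by
        rw [integral_norm_sum_sq_of_integral_inner_eq_zero _ (fun i _ => hu i)
          fun i _ j _ hij => horth i j hij]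
    _ ≤ n⁻¹ ^ 2 * ∑ i, (a + b * c i) := by gcongr with i; exact hbound i
    _ = _ := by
        rw [sum_add_distrib, sum_const, card_univ, nsmul_eq_mul, ← mul_sum]
        linear_combination a * hn

theorem integral_inner_eq_zero_of_condExp_eq_zero [CompleteSpace E] {m : MeasurableSpace Ω}
    (hm : m ≤ mΩ) [SigmaFinite (μ.trim hm)] {X Y : Ω → E} (hX : StronglyMeasurable[m] X)
    (hXY : Integrable (fun ω => ⟪X ω, Y ω⟫) μ) (hY : Integrable Y μ) (hY₀ : μ[Y | m] =ᵐ[μ] 0) :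
    ∫ ω, ⟪X ω, Y ω⟫ ∂μ = 0 := by
  have hpull : μ[fun ω => ⟪X ω, Y ω⟫ | m] =ᵐ[μ] fun ω => ⟪X ω, μ[Y | m] ω⟫ :=
    condExp_bilin_of_stronglyMeasurable_left (innerSL ℝ) hX hXY hY
  rw [← integral_condExp hm, integral_congr_ae (hpull.trans ?_), integral_zero]
  filter_upwards [hY₀] with ω hω
  simp [hω]

end L2

section SGD

variable {E : Type*} [NormedAddCommGroup E] [InnerProductSpace ℝ E]
  {Ω : Type*} {mΩ : MeasurableSpace Ω}

structure IsSGDTrajectory (μ : Measure Ω) (ℱ : Filtration ℕ mΩ) (G : E → E) (η χ : ℝ)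
    (w g : ℕ → Ω → E) : Prop where
  update : ∀ t, w (t + 1) = fun ω => w t ω - η • g t ω
  stronglyMeasurable_iterate : ∀ t, StronglyMeasurable[ℱ t] (w t)
  stronglyMeasurable_stochasticGrad : ∀ t, StronglyMeasurable[ℱ (t + 1)] (g t)
  memLp_iterate : ∀ t, MemLp (w t) 2 μ
  memLp_stochasticGrad : ∀ t, MemLp (g t) 2 μ
  condExp_stochasticGrad : ∀ t, μ[g t | ℱ t] =ᵐ[μ] fun ω => G (w t ω)
  integral_norm_noise_sq_le : ∀ t, ∫ ω, ‖g t ω - G (w t ω)‖ ^ 2 ∂μ ≤ χ ^ 2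

namespace IsSGDTrajectory

variable {μ : Measure Ω} {ℱ : Filtration ℕ mΩ} {G : E → E} {K : ℝ≥0} {η χ : ℝ} {w g : ℕ → Ω → E}

theorem iterate_eq (h : IsSGDTrajectory μ ℱ G η χ w g) (t : ℕ) (ω : Ω) :
    w t ω = w 0 ω - η • ∑ s ∈ range t, g s ω := by
  induction t with
  | zero => simp
  | succ t ih =>
    simp only [h.update, ih, sum_range_succ, smul_add, sub_sub]

variable [IsFiniteMeasure μ]

theorem memLp_noise (h : IsSGDTrajectory μ ℱ G η χ w g) (hG : LipschitzWith K G) (t : ℕ) :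
    MemLp (fun ω => g t ω - G (w t ω)) 2 μ :=
  (h.memLp_stochasticGrad t).sub (hG.memLp_comp (h.memLp_iterate t))

theorem condExp_noise [CompleteSpace E] (h : IsSGDTrajectory μ ℱ G η χ w g)
    (hG : LipschitzWith K G) (t : ℕ) :
    μ[fun ω => g t ω - G (w t ω) | ℱ t] =ᵐ[μ] 0 := by
  have hGw : MemLp (fun ω => G (w t ω)) 2 μ := hG.memLp_comp (h.memLp_iterate t)
  have hGw_meas : StronglyMeasurable[ℱ t] fun ω => G (w t ω) :=
    hG.continuous.comp_stronglyMeasurable (h.stronglyMeasurable_iterate t)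
  refine (condExp_sub ((h.memLp_stochasticGrad t).integrable one_le_two)
    (hGw.integrable one_le_two) _).trans ?_
  rw [condExp_of_stronglyMeasurable (ℱ.le t) hGw_meas (hGw.integrable one_le_two)]
  filter_upwards [h.condExp_stochasticGrad t] with ω hω
  simp [hω]

theorem integral_inner_noise_eq_zero [CompleteSpace E] (h : IsSGDTrajectory μ ℱ G η χ w g)
    (hG : LipschitzWith K G) {s t : ℕ} (hst : s < t) :
    ∫ ω, ⟪g s ω - G (w s ω), g t ω - G (w t ω)⟫ ∂μ = 0 := by
  have hmeas : StronglyMeasurable[ℱ t] fun ω => g s ω - G (w s ω) :=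
    ((h.stronglyMeasurable_stochasticGrad s).mono (ℱ.mono hst)).sub
      (hG.continuous.comp_stronglyMeasurable
        ((h.stronglyMeasurable_iterate s).mono (ℱ.mono hst.le)))
  exact integral_inner_eq_zero_of_condExp_eq_zero (ℱ.le t) hmeas
    ((h.memLp_noise hG s).integrable_inner (h.memLp_noise hG t))
    ((h.memLp_noise hG t).integrable one_le_two) (h.condExp_noise hG t)

theorem integral_norm_sum_noise_sq_le [CompleteSpace E] (h : IsSGDTrajectory μ ℱ G η χ w g)
    (hG : LipschitzWith K G) (n : ℕ) :
    ∫ ω, ‖∑ s ∈ range n, (g s ω - G (w s ω))‖ ^ 2 ∂μ ≤ n * χ ^ 2 := by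
  rw [integral_norm_sum_sq_of_integral_inner_eq_zero _ (fun s _ => h.memLp_noise hG s)]
  · simpa using sum_le_card_nsmul (range n) _ _ fun s _ => h.integral_norm_noise_sq_le s
  intro s _ t _ hst
  rcases hst.lt_or_gt with hst | hts
  · exact h.integral_inner_noise_eq_zero hG hst
  · rw [← h.integral_inner_noise_eq_zero hG hts]
    exact integral_congr_ae (ae_of_all _ fun ω => real_inner_comm _ _)

theorem integral_norm_drift_sq_le [CompleteSpace E] (h : IsSGDTrajectory μ ℱ G η χ w g)
    (hG : LipschitzWith K G) (t : ℕ) :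
    ∫ ω, ‖w t ω - w 0 ω‖ ^ 2 ∂μ
      ≤ 2 * η ^ 2 * t * (χ ^ 2 + ∑ s ∈ range t, ∫ ω, ‖G (w s ω)‖ ^ 2 ∂μ) := by
  have hsplit : ∀ ω, ‖w t ω - w 0 ω‖ ^ 2
      = η ^ 2 * ‖∑ s ∈ range t, (g s ω - G (w s ω)) + ∑ s ∈ range t, G (w s ω)‖ ^ 2 := by
    intro ω
    rw [h.iterate_eq t ω, sub_sub_cancel_left, norm_neg, norm_smul, mul_pow, Real.norm_eq_abs,
      sq_abs, ← sum_add_distrib]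
    simp only [sub_add_cancel]
  have hGw : ∀ s, MemLp (fun ω => G (w s ω)) 2 μ := fun s => hG.memLp_comp (h.memLp_iterate s)
  have hnoise := h.integral_norm_sum_noise_sq_le hG t
  have hgrad := integral_norm_sum_sq_le_card_mul (μ := μ) (range t) fun s _ => hGw s
  have hadd := integral_norm_add_sq_le
    (memLp_finsetSum (range t) (f := fun s ω => g s ω - G (w s ω)) fun s _ => h.memLp_noise hG s)
    (memLp_finsetSum (range t) fun s _ => hGw s)
  rw [card_range] at hgrad
  rw [integral_congr_ae (ae_of_all _ hsplit), integral_const_mul]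
  calc _ ≤ η ^ 2 * (2 * (t * χ ^ 2 + t * ∑ s ∈ range t, ∫ ω, ‖G (w s ω)‖ ^ 2 ∂μ)) := by
        gcongr; linarith
    _ = _ := by ring

theorem integral_norm_drift_sq_le_of_small_step [CompleteSpace E]
    (h : IsSGDTrajectory μ ℱ G η χ w g) (hG : LipschitzWith K G) {T : ℕ} (hη : 0 ≤ η)
    (hstep : 4 * η * T * K ≤ 1) {t : ℕ} (ht : t ≤ T) :
    ∫ ω, ‖w t ω - w 0 ω‖ ^ 2 ∂μ
      ≤ 2 * (2 * η ^ 2 * T * χ ^ 2 + 4 * η ^ 2 * T ^ 2 * ∫ ω, ‖G (w 0 ω)‖ ^ 2 ∂μ) := by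
  set D : ℕ → ℝ := fun t => ∫ ω, ‖w t ω - w 0 ω‖ ^ 2 ∂μ
  set G₀ := ∫ ω, ‖G (w 0 ω)‖ ^ 2 ∂μ
  have hG₀ : 0 ≤ G₀ := integral_nonneg fun ω => by positivity
  have hD : ∀ t, 0 ≤ D t := fun t => integral_nonneg fun ω => by positivity
  have hstep_sq : (4 * η * T * K) ^ 2 ≤ 1 := pow_le_one₀ (by positivity) hstep
  refine le_two_mul_of_le_add_mul_sum_range (D := D)
    (B := 2 * η ^ 2 * T * χ ^ 2 + 4 * η ^ 2 * T ^ 2 * G₀) (κ := 4 * η ^ 2 * K ^ 2 * T)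
    (by positivity) (by positivity) (by nlinarith) (fun t ht => ?_) t ht
  have hgrad : ∑ s ∈ range t, ∫ ω, ‖G (w s ω)‖ ^ 2 ∂μ
      ≤ 2 * t * G₀ + 2 * K ^ 2 * ∑ s ∈ range t, D s := by
    calc _ ≤ ∑ s ∈ range t, 2 * (G₀ + K ^ 2 * D s) := sum_le_sum fun s _ =>
          hG.integral_norm_comp_sq_le (h.memLp_iterate s) (h.memLp_iterate 0)
      _ = _ := by
          rw [← mul_sum, sum_add_distrib, ← mul_sum, sum_const, card_range, nsmul_eq_mul]
          ring
  have ht' : (t : ℝ) ≤ T := by exact_mod_cast ht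
  have hsum_nonneg : 0 ≤ ∑ s ∈ range t, D s := sum_nonneg fun s _ => hD s
  calc D t ≤ 2 * η ^ 2 * t * (χ ^ 2 + (2 * t * G₀ + 2 * K ^ 2 * ∑ s ∈ range t, D s)) :=
        (h.integral_norm_drift_sq_le hG t).trans (by gcongr)
    _ = 2 * η ^ 2 * χ ^ 2 * t + 4 * η ^ 2 * G₀ * t ^ 2
          + 4 * η ^ 2 * K ^ 2 * (∑ s ∈ range t, D s) * t := by ring
    _ ≤ 2 * η ^ 2 * χ ^ 2 * T + 4 * η ^ 2 * G₀ * T ^ 2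
          + 4 * η ^ 2 * K ^ 2 * (∑ s ∈ range t, D s) * T := by gcongr
    _ = _ := by ring

theorem integral_norm_sub_average_sq_le [CompleteSpace E] (h : IsSGDTrajectory μ ℱ G η χ w g)
    (hG : LipschitzWith K G) {T : ℕ} (hT : 0 < T) (hη : 0 ≤ η) (hstep : 4 * η * T * K ≤ 1) :
    ∫ ω, ‖G (w 0 ω) - (T : ℝ)⁻¹ • ∑ t ∈ range T, G (w t ω)‖ ^ 2 ∂μ
      ≤ 4 * T * η ^ 2 * χ ^ 2 * K ^ 2 + 8 * T ^ 2 * η ^ 2 * K ^ 2 * ∫ ω, ‖G (w 0 ω)‖ ^ 2 ∂μ := by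
  have hpt : ∀ ω, ‖G (w 0 ω) - (T : ℝ)⁻¹ • ∑ t ∈ range T, G (w t ω)‖ ^ 2
      ≤ (T : ℝ)⁻¹ * K ^ 2 * ∑ t ∈ range T, ‖w t ω - w 0 ω‖ ^ 2 := by
    intro ω
    calc _ ≤ (T : ℝ)⁻¹ * ∑ t ∈ range T, ‖G (w 0 ω) - G (w t ω)‖ ^ 2 := by
          simpa using norm_sub_average_sq_le (nonempty_range_iff.2 hT.ne') (G (w 0 ω))
            fun t => G (w t ω)
      _ ≤ (T : ℝ)⁻¹ * ∑ t ∈ range T, K ^ 2 * ‖w t ω - w 0 ω‖ ^ 2 := by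
          gcongr with t
          rw [norm_sub_rev]
          exact hG.norm_sub_sq_le _ _
      _ = _ := by rw [← mul_sum, mul_assoc]
  have hint : ∀ t, Integrable (fun ω => ‖w t ω - w 0 ω‖ ^ 2) μ := fun t =>
    ((h.memLp_iterate t).sub (h.memLp_iterate 0)).integrable_norm_sq
  have hdrift : ∀ t ∈ range T, ∫ ω, ‖w t ω - w 0 ω‖ ^ 2 ∂μ
      ≤ 2 * (2 * η ^ 2 * T * χ ^ 2 + 4 * η ^ 2 * T ^ 2 * ∫ ω, ‖G (w 0 ω)‖ ^ 2 ∂μ) :=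
    fun t ht => h.integral_norm_drift_sq_le_of_small_step hG hη hstep (mem_range.1 ht).le
  have hT' : (0 : ℝ) < T := by exact_mod_cast hT
  calc _ ≤ ∫ ω, (T : ℝ)⁻¹ * K ^ 2 * ∑ t ∈ range T, ‖w t ω - w 0 ω‖ ^ 2 ∂μ :=
        integral_mono_of_nonneg (ae_of_all _ fun ω => by positivity)
          ((integrable_finsetSum _ fun t _ => hint t).const_mul _) (ae_of_all _ hpt)
    _ = (T : ℝ)⁻¹ * K ^ 2 * ∑ t ∈ range T, ∫ ω, ‖w t ω - w 0 ω‖ ^ 2 ∂μ := by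
        rw [integral_const_mul, integral_finsetSum _ fun t _ => hint t]
    _ ≤ (T : ℝ)⁻¹ * K ^ 2 * (T * (2 * (2 * η ^ 2 * T * χ ^ 2
          + 4 * η ^ 2 * T ^ 2 * ∫ ω, ‖G (w 0 ω)‖ ^ 2 ∂μ))) := by
        gcongr
        simpa using sum_le_card_nsmul _ _ _ hdrift
    _ = _ := by field_simp; ring

end IsSGDTrajectory

end SGD

theorem gatta_lemma6_general
    {E : Type*} [NormedAddCommGroup E] [InnerProductSpace ℝ E] [FiniteDimensional ℝ E]
    {Ω : Type*} {mΩ : MeasurableSpace Ω} {μ : Measure Ω} [IsProbabilityMeasure μ]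
    (ℱ : Filtration ℕ mΩ)
    {N : ℕ}
    (f : Fin N → E → ℝ) (L : ℝ)
    (hsmooth : ∀ i, ∀ x y : E, ‖gradient (f i) x - gradient (f i) y‖ ≤ L * ‖x - y‖)
    (T : ℕ) (η : ℝ) (hη : 0 < η) (χ : ℝ)
    (w g : Fin N → ℕ → Ω → E)
    (hupd : ∀ i t, w i (t + 1) = fun ω => w i t ω - η • g i t ω)
    (hw_meas : ∀ i t, StronglyMeasurable[ℱ t] (w i t))
    (hg_meas : ∀ i t, StronglyMeasurable[ℱ (t + 1)] (g i t))
    (hw_L2 : ∀ i t, MemLp (w i t) 2 μ)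
    (hg_L2 : ∀ i t, MemLp (g i t) 2 μ)
    (h_unbiased : ∀ i t, μ[g i t | ℱ t] =ᵐ[μ] fun ω => gradient (f i) (w i t ω))
    (h_var : ∀ i t, ∫ ω, ‖g i t ω - gradient (f i) (w i t ω)‖ ^ 2 ∂μ ≤ χ ^ 2)
    (hη_small : η < 1 / (4 * T * L))
    (u : Fin N → Ω → E)
    (hu : ∀ i, u i = fun ω =>
      gradient (f i) (w i 0 ω) - (T : ℝ)⁻¹ • ∑ t ∈ Finset.range T, gradient (f i) (w i t ω))
    (h_orth : ∀ i j, i ≠ j → ∫ ω, ⟪u i ω, u j ω⟫ ∂μ = 0) :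
    ∫ ω, ‖(N : ℝ)⁻¹ • ∑ i, u i ω‖ ^ 2 ∂μ
      ≤ 4 * T * η ^ 2 * χ ^ 2 * L ^ 2 / N
        + 16 * T ^ 2 * η ^ 2 * L ^ 2 / N ^ 2 * ∑ i, ∫ ω, ‖gradient (f i) (w i 0 ω)‖ ^ 2 ∂μ := by
  have hTL : 0 < 4 * T * L := one_div_pos.mp (hη.trans hη_small)
  have hT : 0 < T := Nat.pos_of_ne_zero fun hT => by simp [hT] at hTL
  have hL : 0 ≤ L := (pos_of_mul_pos_right hTL (by positivity)).le
  have hstep : 4 * η * T * L ≤ 1 := by linarith [(lt_div_iff₀ hTL).1 hη_small]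
  let K : ℝ≥0 := ⟨L, hL⟩
  have hG : ∀ i, LipschitzWith K (gradient (f i)) := fun i =>
    LipschitzWith.of_dist_le_mul fun x y => by
      rw [dist_eq_norm, dist_eq_norm]; exact hsmooth i x y
  have htraj : ∀ i, IsSGDTrajectory μ ℱ (gradient (f i)) η χ (w i) (g i) := fun i =>
    ⟨hupd i, hw_meas i, hg_meas i, hw_L2 i, hg_L2 i, h_unbiased i, h_var i⟩
  have hu_L2 : ∀ i, MemLp (u i) 2 μ := fun i => hu i ▸ ((hG i).memLp_comp (hw_L2 i 0)).sub
    ((memLp_finsetSum _ fun t _ => (hG i).memLp_comp (hw_L2 i t)).const_smul _)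
  have hnode : ∀ i, ∫ ω, ‖u i ω‖ ^ 2 ∂μ ≤ 4 * T * η ^ 2 * χ ^ 2 * L ^ 2
      + 8 * T ^ 2 * η ^ 2 * L ^ 2 * ∫ ω, ‖gradient (f i) (w i 0 ω)‖ ^ 2 ∂μ := fun i =>
    hu i ▸ (htraj i).integral_norm_sub_average_sq_le (hG i) hT hη.le hstep
  have havg := integral_norm_average_sq_le_of_integral_inner_eq_zero hu_L2 h_orth hnode
  rw [Fintype.card_fin] at havg
  refine havg.trans ?_
  gcongr
  norm_num

/-- **Lemma (gradient-drift averaging).** For `N` parallel stochastic-gradient trajectories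
with `η < 1/(4TL)`, and `uᵢ = ∇fᵢ(wᵢ) − (1/T)Σ_t ∇fᵢ(w_{i,t})` pairwise orthogonal in `L²`,
`E[‖(1/N)Σᵢ uᵢ‖²] ≤ 4Tη²χ²L²/N + (16T²η²L²/N²)·Σᵢ E[‖∇fᵢ(wᵢ)‖²]`. -/
theorem gatta_lemma6
    {E : Type*} [NormedAddCommGroup E] [InnerProductSpace ℝ E] [FiniteDimensional ℝ E]
    {Ω : Type*} {mΩ : MeasurableSpace Ω} {μ : Measure Ω} [IsProbabilityMeasure μ]
    (ℱ : Filtration ℕ mΩ)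
    {N : ℕ} (hN : 0 < N)
    (f : Fin N → E → ℝ) (L : ℝ) (hL : 0 < L)
    (hdiff : ∀ i, Differentiable ℝ (f i))
    (hsmooth : ∀ i, ∀ x y : E, ‖gradient (f i) x - gradient (f i) y‖ ≤ L * ‖x - y‖)
    (T : ℕ) (hT : 1 ≤ T) (η : ℝ) (hη : 0 < η) (χ : ℝ) (hχ : 0 ≤ χ)
    (w g : Fin N → ℕ → Ω → E)
    (hupd : ∀ i t, w i (t + 1) = fun ω => w i t ω - η • g i t ω)
    (hw_meas : ∀ i t, StronglyMeasurable[ℱ t] (w i t))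
    (hg_meas : ∀ i t, StronglyMeasurable[ℱ (t + 1)] (g i t))
    (hw_L2 : ∀ i t, MemLp (w i t) 2 μ)
    (hg_L2 : ∀ i t, MemLp (g i t) 2 μ)
    (h_unbiased : ∀ i t, μ[g i t | ℱ t] =ᵐ[μ] fun ω => gradient (f i) (w i t ω))
    (h_var : ∀ i t, ∫ ω, ‖g i t ω - gradient (f i) (w i t ω)‖ ^ 2 ∂μ ≤ χ ^ 2)
    (hη_small : η < 1 / (4 * T * L))
    (u : Fin N → Ω → E)
    (hu : ∀ i, u i = fun ω =>
      gradient (f i) (w i 0 ω) - (T : ℝ)⁻¹ • ∑ t ∈ Finset.range T, gradient (f i) (w i t ω))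
    (h_orth : ∀ i j, i ≠ j → ∫ ω, ⟪u i ω, u j ω⟫ ∂μ = 0) :
    ∫ ω, ‖(N : ℝ)⁻¹ • ∑ i, u i ω‖ ^ 2 ∂μ
      ≤ 4 * T * η ^ 2 * χ ^ 2 * L ^ 2 / N
        + 16 * T ^ 2 * η ^ 2 * L ^ 2 / N ^ 2 * ∑ i, ∫ ω, ‖gradient (f i) (w i 0 ω)‖ ^ 2 ∂μ :=
  gatta_lemma6_general ℱ f L hsmooth T η hη χ w g hupd hw_meas hg_meas hw_L2 hg_L2 h_unbiased h_var
    hη_small u hu h_orth
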